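/- arXiv:1703.09754 — 5 statements merged into one kernel-verified Lean document; each statement's English description precedes it below -/
import Mathlib

section
/- Let (X,d) be a compact metric space with a fixed reference probability measure m, and assume (X,d,m) is regular: every coupling γ between m and any ν ∈ P(X) achieving the infimum defining W₂(m,ν) is of the form γ = (Id,T)_# m for some measurable map T : X → X. Then for each μ ∈ P(X), the minimizer of the functional ν ↦ W₂(ν, m) over the set {ν ∈ P(X) : supp ν ⊆ b(μ)} is unique. -/
open MeasureTheory Filter

section Defs

variable {X : Type*} [MetricSpace X] [MeasurableSpace X]

/-- The set of metric barycenters of `μ`: the minimizers over `y ∈ X` of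
`y ↦ ∫ d(x,y)² dμ(x)`. -/
def bary (μ : ProbabilityMeasure X) : Set X :=
  {y : X | ∀ z : X,
    ∫ x, dist x y ^ 2 ∂(μ : Measure X) ≤ ∫ x, dist x z ^ 2 ∂(μ : Measure X)}

/-- `γ` is a coupling of `μ` and `ν`: a measure on `X × X` with marginals `μ` and `ν`. -/
def IsCoupling (γ : Measure (X × X)) (μ ν : ProbabilityMeasure X) : Prop :=
  γ.map Prod.fst = (μ : Measure X) ∧ γ.map Prod.snd = (ν : Measure X)

/-- The squared 2-Wasserstein distance `W₂(μ,ν)²`. -/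
noncomputable def W2sq (μ ν : ProbabilityMeasure X) : ℝ :=
  sInf {c : ℝ | ∃ γ : Measure (X × X), IsCoupling γ μ ν ∧
    c = ∫ p, dist p.1 p.2 ^ 2 ∂γ}

/-- The 2-Wasserstein distance `W₂(μ,ν)`. -/
noncomputable def W2 (μ ν : ProbabilityMeasure X) : ℝ := Real.sqrt (W2sq μ ν)

/-- The support of a probability measure: the set of points all of whose open
neighbourhoods have positive measure. -/
def mSupport (μ : ProbabilityMeasure X) : Set X :=
  {x : X | ∀ U : Set X, IsOpen U → x ∈ U → (μ : Measure X) U ≠ 0}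

/-- `(X,d,m)` is regular: every coupling between `m` and any `ν ∈ P(X)` achieving the
infimum defining `W₂(m,ν)` is of the form `(Id,T)_# m` for some measurable map `T`. -/
def Regular (m : ProbabilityMeasure X) : Prop :=
  ∀ ν : ProbabilityMeasure X, ∀ γ : Measure (X × X), IsCoupling γ m ν →
    (∫ p, dist p.1 p.2 ^ 2 ∂γ) = W2sq m ν →
    ∃ T : X → X, Measurable T ∧ γ = (m : Measure X).map (fun x => (x, T x))

/-- The variance of `μ`: the minimal value of `y ↦ ∫ d(x,y)² dμ(x)`. -/
noncomputable def mvar (μ : ProbabilityMeasure X) : ℝ :=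
  ⨅ y : X, ∫ x, dist x y ^ 2 ∂(μ : Measure X)

end Defs


/-!
The admissible set `{ν : supp ν ⊆ b(μ)}` is closed under midpoints. Let `γ₁, γ₂` be optimal
couplings of `m` with two minimizers `ν₁, ν₂` (they exist since `P(X × X)` is compact and the
cost is continuous). Then `(γ₁ + γ₂)/2` couples `m` with the admissible measure `(ν₁ + ν₂)/2`
at cost `(W₂(m,ν₁)² + W₂(m,ν₂)²)/2`, which by minimality is at most `W₂(m, (ν₁ + ν₂)/2)²`, so
this coupling is optimal. Regularity puts it on the graph of a map `T`; `γ₁` and `γ₂` are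
absolutely continuous with respect to it, so they live on that graph too, and
`ν₁ = T_# m = ν₂`.
-/

open scoped ENNReal

section Coupling

variable {X : Type*} [MeasurableSpace X]

lemma IsCoupling.isProbabilityMeasure {γ : Measure (X × X)} {μ ν : ProbabilityMeasure X}
    (hγ : IsCoupling γ μ ν) : IsProbabilityMeasure γ := by
  have h := congrArg (fun ρ : Measure X => ρ Set.univ) hγ.1
  simp only [Measure.map_apply measurable_fst MeasurableSet.univ, Set.preimage_univ,
    measure_univ] at h
  exact ⟨h⟩

lemma IsCoupling.map_swap {γ : Measure (X × X)} {μ ν : ProbabilityMeasure X}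
    (hγ : IsCoupling γ μ ν) : IsCoupling (γ.map Prod.swap) ν μ := by
  constructor
  · rw [Measure.map_map measurable_fst measurable_swap]
    exact hγ.2
  · rw [Measure.map_map measurable_snd measurable_swap]
    exact hγ.1

noncomputable def MeasureTheory.ProbabilityMeasure.midpoint (μ ν : ProbabilityMeasure X) :
    ProbabilityMeasure X :=
  ⟨(2⁻¹ : ℝ≥0∞) • ((μ : Measure X) + ν), ⟨by simp [ENNReal.inv_two_add_inv_two]⟩⟩

lemma MeasureTheory.ProbabilityMeasure.coe_midpoint (μ ν : ProbabilityMeasure X) :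
    (μ.midpoint ν : Measure X) = (2⁻¹ : ℝ≥0∞) • ((μ : Measure X) + ν) := rfl

lemma MeasureTheory.ProbabilityMeasure.midpoint_self (μ : ProbabilityMeasure X) :
    μ.midpoint μ = μ := by
  apply ProbabilityMeasure.toMeasure_injective
  rw [coe_midpoint, ← two_smul ℝ≥0∞, smul_smul,
    ENNReal.inv_mul_cancel two_ne_zero ENNReal.ofNat_ne_top, one_smul]

lemma IsCoupling.midpoint {γ₁ γ₂ : Measure (X × X)} {μ₁ ν₁ μ₂ ν₂ : ProbabilityMeasure X}
    (h₁ : IsCoupling γ₁ μ₁ ν₁) (h₂ : IsCoupling γ₂ μ₂ ν₂) :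
    IsCoupling ((2⁻¹ : ℝ≥0∞) • (γ₁ + γ₂)) (μ₁.midpoint μ₂) (ν₁.midpoint ν₂) := by
  constructor
  · rw [Measure.map_smul, Measure.map_add _ _ measurable_fst, h₁.1, h₂.1]
    rfl
  · rw [Measure.map_smul, Measure.map_add _ _ measurable_snd, h₁.2, h₂.2]
    rfl

end Coupling

section Wasserstein

variable {X : Type*} [MetricSpace X] [MeasurableSpace X]

lemma integral_dist_sq_map_swap (γ : Measure (X × X)) :
    ∫ p, dist p.1 p.2 ^ 2 ∂(γ.map Prod.swap) = ∫ p, dist p.1 p.2 ^ 2 ∂γ := by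
  rw [show Prod.swap = MeasurableEquiv.prodComm (α := X) (β := X) from rfl, integral_map_equiv]
  exact integral_congr_ae (ae_of_all _ fun p => congrArg (· ^ 2) (dist_comm p.2 p.1))

lemma W2sq_le_integral {γ : Measure (X × X)} {μ ν : ProbabilityMeasure X}
    (hγ : IsCoupling γ μ ν) : W2sq μ ν ≤ ∫ p, dist p.1 p.2 ^ 2 ∂γ :=
  csInf_le ⟨0, by rintro _ ⟨γ, -, rfl⟩; positivity⟩ ⟨γ, hγ, rfl⟩

lemma W2sq_nonneg (μ ν : ProbabilityMeasure X) : 0 ≤ W2sq μ ν :=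
  Real.sInf_nonneg (by rintro _ ⟨γ, -, rfl⟩; positivity)

lemma W2sq_comm (μ ν : ProbabilityMeasure X) : W2sq μ ν = W2sq ν μ := by
  have costs_subset : ∀ μ ν : ProbabilityMeasure X,
      {c : ℝ | ∃ γ : Measure (X × X), IsCoupling γ μ ν ∧ c = ∫ p, dist p.1 p.2 ^ 2 ∂γ} ⊆
        {c | ∃ γ : Measure (X × X), IsCoupling γ ν μ ∧ c = ∫ p, dist p.1 p.2 ^ 2 ∂γ} := by
    rintro μ ν _ ⟨γ, hγ, rfl⟩
    exact ⟨γ.map Prod.swap, hγ.map_swap, (integral_dist_sq_map_swap γ).symm⟩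
  exact congrArg sInf ((costs_subset μ ν).antisymm (costs_subset ν μ))

lemma W2_le_W2_iff {μ ν μ' ν' : ProbabilityMeasure X} :
    W2 μ ν ≤ W2 μ' ν' ↔ W2sq μ ν ≤ W2sq μ' ν' :=
  Real.sqrt_le_sqrt_iff (W2sq_nonneg μ' ν')

lemma mSupport_midpoint_subset (μ ν : ProbabilityMeasure X) :
    mSupport (μ.midpoint ν) ⊆ mSupport μ ∪ mSupport ν := by
  intro x hx
  by_contra hx'
  simp only [Set.mem_union, mSupport, Set.mem_ofPred_eq, not_or, not_forall, not_not] at hx'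
  obtain ⟨⟨U, hU, hxU, hμU⟩, ⟨V, hV, hxV, hνV⟩⟩ := hx'
  refine hx (U ∩ V) (hU.inter hV) ⟨hxU, hxV⟩ ?_
  rw [ProbabilityMeasure.coe_midpoint, Measure.smul_apply, Measure.add_apply,
    measure_mono_null Set.inter_subset_left hμU, measure_mono_null Set.inter_subset_right hνV]
  simp

end Wasserstein

section Graph

variable {X : Type*} [MeasurableSpace X] [MeasurableEq X]

lemma IsCoupling.snd_eq_map_of_absolutelyContinuous_graph {γ : Measure (X × X)}
    {μ ν : ProbabilityMeasure X} {T : X → X} (hγ : IsCoupling γ μ ν) (hT : Measurable T)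
    (hac : γ ≪ (μ : Measure X).map (fun x => (x, T x))) :
    (ν : Measure X) = (μ : Measure X).map T := by
  have hgraph : ∀ᵐ p ∂γ, p.2 = T p.1 :=
    hac.ae_le ((ae_map_iff (measurable_id.prodMk hT).aemeasurable
      (measurableSet_eq_fun measurable_snd (hT.comp measurable_fst))).2 (ae_of_all _ fun _ => rfl))
  calc (ν : Measure X) = γ.map Prod.snd := hγ.2.symm
    _ = γ.map (T ∘ Prod.fst) := Measure.map_congr hgraph
    _ = (μ : Measure X).map T := by rw [← Measure.map_map hT measurable_fst, hγ.1]

lemma IsCoupling.eq_of_midpoint_eq_map_graph {γ₁ γ₂ : Measure (X × X)}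
    {μ ν₁ ν₂ : ProbabilityMeasure X} {T : X → X} (hγ₁ : IsCoupling γ₁ μ ν₁)
    (hγ₂ : IsCoupling γ₂ μ ν₂) (hT : Measurable T)
    (hγT : (2⁻¹ : ℝ≥0∞) • (γ₁ + γ₂) = (μ : Measure X).map (fun x => (x, T x))) :
    ν₁ = ν₂ := by
  obtain ⟨hac₁, hac₂⟩ := Measure.AbsolutelyContinuous.add_left_iff.1
    (Measure.absolutelyContinuous_smul (μ := γ₁ + γ₂) (c := 2⁻¹) (by simp))
  rw [hγT] at hac₁ hac₂
  exact ProbabilityMeasure.toMeasure_injective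
    ((hγ₁.snd_eq_map_of_absolutelyContinuous_graph hT hac₁).trans
      (hγ₂.snd_eq_map_of_absolutelyContinuous_graph hT hac₂).symm)

end Graph

section Compact

variable {X : Type*} [MetricSpace X] [CompactSpace X] [MeasurableSpace X] [BorelSpace X]

lemma integrable_dist_sq (γ : Measure (X × X)) [IsFiniteMeasure γ] :
    Integrable (fun p : X × X => dist p.1 p.2 ^ 2) γ :=
  (BoundedContinuousFunction.mkOfCompact ⟨_, continuous_dist.pow 2⟩).integrable γ

lemma integral_dist_sq_midpoint (γ₁ γ₂ : Measure (X × X)) [IsFiniteMeasure γ₁]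
    [IsFiniteMeasure γ₂] :
    ∫ p, dist p.1 p.2 ^ 2 ∂((2⁻¹ : ℝ≥0∞) • (γ₁ + γ₂)) =
      (∫ p, dist p.1 p.2 ^ 2 ∂γ₁ + ∫ p, dist p.1 p.2 ^ 2 ∂γ₂) / 2 := by
  rw [integral_smul_measure, integral_add_measure (integrable_dist_sq γ₁) (integrable_dist_sq γ₂),
    ENNReal.toReal_inv, ENNReal.toReal_ofNat, smul_eq_mul, inv_mul_eq_div]

lemma continuous_integral_dist_sq :
    Continuous fun γ : ProbabilityMeasure (X × X) => ∫ p, dist p.1 p.2 ^ 2 ∂(γ : Measure (X × X)) :=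
  ProbabilityMeasure.continuous_integral_boundedContinuousFunction
    (BoundedContinuousFunction.mkOfCompact ⟨_, continuous_dist.pow 2⟩)

lemma isClosed_setOf_isCoupling (μ ν : ProbabilityMeasure X) :
    IsClosed {γ : ProbabilityMeasure (X × X) | IsCoupling γ μ ν} := by
  have hmap : ∀ γ : ProbabilityMeasure (X × X), IsCoupling γ μ ν ↔
      γ.map measurable_fst.aemeasurable = μ ∧ γ.map measurable_snd.aemeasurable = ν := by
    simp [IsCoupling, ← ProbabilityMeasure.toMeasure_injective.eq_iff,
      ProbabilityMeasure.toMeasure_map]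
  simp only [hmap, Set.ofPred_and]
  exact (isClosed_eq (ProbabilityMeasure.continuous_map continuous_fst) continuous_const).inter
    (isClosed_eq (ProbabilityMeasure.continuous_map continuous_snd) continuous_const)

theorem exists_isCoupling_integral_eq_W2sq (μ ν : ProbabilityMeasure X) :
    ∃ γ : Measure (X × X), IsCoupling γ μ ν ∧ ∫ p, dist p.1 p.2 ^ 2 ∂γ = W2sq μ ν := by
  have hne : {γ : ProbabilityMeasure (X × X) | IsCoupling γ μ ν}.Nonempty :=
    ⟨μ.prod ν, by simp [IsCoupling]⟩
  obtain ⟨γ, hγ, hmin⟩ := (isClosed_setOf_isCoupling μ ν).isCompact.exists_isMinOn hne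
    continuous_integral_dist_sq.continuousOn
  refine ⟨γ, hγ, le_antisymm (le_csInf ⟨_, γ, hγ, rfl⟩ ?_) (W2sq_le_integral hγ)⟩
  rintro _ ⟨ρ, hρ, rfl⟩
  exact hmin (a := ⟨ρ, hρ.isProbabilityMeasure⟩) hρ

end Compact

/-- If `(X,d,m)` is regular, the minimizer of `ν ↦ W₂(ν, m)` over
`{ν ∈ P(X) : supp ν ⊆ b(μ)}` is unique. -/
theorem unique_min_W2_support_bary
    {X : Type*} [MetricSpace X] [CompactSpace X]
    [MeasurableSpace X] [BorelSpace X]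
    (m : ProbabilityMeasure X) (hreg : Regular m) (μ : ProbabilityMeasure X)
    (ν₁ ν₂ : ProbabilityMeasure X)
    (h₁ : mSupport ν₁ ⊆ bary μ ∧
      ∀ ρ : ProbabilityMeasure X, mSupport ρ ⊆ bary μ → W2 ν₁ m ≤ W2 ρ m)
    (h₂ : mSupport ν₂ ⊆ bary μ ∧
      ∀ ρ : ProbabilityMeasure X, mSupport ρ ⊆ bary μ → W2 ν₂ m ≤ W2 ρ m) :
    ν₁ = ν₂ := by
  obtain ⟨γ₁, hγ₁, hcost₁⟩ := exists_isCoupling_integral_eq_W2sq m ν₁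
  obtain ⟨γ₂, hγ₂, hcost₂⟩ := exists_isCoupling_integral_eq_W2sq m ν₂
  have := hγ₁.isProbabilityMeasure
  have := hγ₂.isProbabilityMeasure
  have hsupp : mSupport (ν₁.midpoint ν₂) ⊆ bary μ :=
    (mSupport_midpoint_subset ν₁ ν₂).trans (Set.union_subset h₁.1 h₂.1)
  have hle₁ : W2sq m ν₁ ≤ W2sq m (ν₁.midpoint ν₂) := by
    simpa only [W2sq_comm m] using W2_le_W2_iff.1 (h₁.2 _ hsupp)
  have hle₂ : W2sq m ν₂ ≤ W2sq m (ν₁.midpoint ν₂) := by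
    simpa only [W2sq_comm m] using W2_le_W2_iff.1 (h₂.2 _ hsupp)
  have hγ : IsCoupling ((2⁻¹ : ℝ≥0∞) • (γ₁ + γ₂)) m (ν₁.midpoint ν₂) := by
    simpa only [ProbabilityMeasure.midpoint_self] using hγ₁.midpoint hγ₂
  have hopt : ∫ p, dist p.1 p.2 ^ 2 ∂((2⁻¹ : ℝ≥0∞) • (γ₁ + γ₂)) = W2sq m (ν₁.midpoint ν₂) := by
    refine le_antisymm ?_ (W2sq_le_integral hγ)
    rw [integral_dist_sq_midpoint, hcost₁, hcost₂]
    linarith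
  obtain ⟨T, hT, hγT⟩ := hreg _ _ hγ hopt
  exact hγ₁.eq_of_midpoint_eq_map_graph hγ₂ hT hγT
end

section
/- Let (X,d) be a compact metric space with a fixed reference probability measure m, and assume (X,d,m) is regular: every coupling γ between m and any ν ∈ P(X) achieving the infimum defining W₂(m,ν) is of the form γ = (Id,T)_# m for some measurable map T : X → X. For μ ∈ P(X), let B(μ) be the unique minimizer of ν ↦ W₂(ν,m) among all ν ∈ P(X) with supp ν ⊆ b(μ). Then var(B(μ)) ≤ var(μ), where var(λ) := min_{y ∈ X} ∫_X d(x,y)² dλ(x). -/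
open MeasureTheory Filter

/-!
Every point of `supp B(μ)` is a barycenter of `μ`, so `∫ d(x,y)² dμ(x) = var(μ)` for
`B(μ)`-almost every `y`. Bounding `var(B(μ))` by `∫ d(x,y)² dB(μ)(y)` at each point `x`,
averaging in `x` against `μ` and swapping the order of integration gives
`var(B(μ)) ≤ ∫∫ d(x,y)² dμ(x) dB(μ)(y) = var(μ)`.
-/

section Proof

variable {X : Type*} [MetricSpace X] [MeasurableSpace X]

lemma mSupport_eq_support (ν : ProbabilityMeasure X) : mSupport ν = (ν : Measure X).support := by
  ext x
  simp only [mSupport, Measure.support_eq_forall_isOpen, Set.mem_ofPred_eq, pos_iff_ne_zero]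
  exact ⟨fun h U hxU hU => h U hU hxU, fun h U hU hxU => h U hxU hU⟩

lemma ae_mem_mSupport [HereditarilyLindelofSpace X] (ν : ProbabilityMeasure X) :
    ∀ᵐ x ∂(ν : Measure X), x ∈ mSupport ν := by
  rw [mSupport_eq_support]
  exact Measure.support_mem_ae

lemma mvar_le (ν : ProbabilityMeasure X) (y : X) :
    mvar ν ≤ ∫ x, dist x y ^ 2 ∂(ν : Measure X) :=
  ciInf_le ⟨0, by rintro _ ⟨z, rfl⟩; positivity⟩ y

lemma integral_dist_sq_eq_mvar_of_mem_bary {μ : ProbabilityMeasure X} {y : X}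
    (hy : y ∈ bary μ) : ∫ x, dist x y ^ 2 ∂(μ : Measure X) = mvar μ :=
  have : Nonempty X := ⟨y⟩
  le_antisymm (le_ciInf hy) (mvar_le μ y)

lemma mvar_le_of_mSupport_subset_bary [CompactSpace X] [OpensMeasurableSpace X]
    {μ ν : ProbabilityMeasure X} (h : mSupport ν ⊆ bary μ) : mvar ν ≤ mvar μ := by
  have hint : Integrable (Function.uncurry fun x y : X => dist y x ^ 2)
      ((μ : Measure X).prod (ν : Measure X)) :=
    Continuous.integrable_of_hasCompactSupport (by fun_prop) (.of_compactSpace _)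
  have hbary : ∀ᵐ y ∂(ν : Measure X), ∫ x, dist y x ^ 2 ∂(μ : Measure X) = mvar μ := by
    filter_upwards [ae_mem_mSupport ν] with y hy
    simp_rw [dist_comm y]
    exact integral_dist_sq_eq_mvar_of_mem_bary (h hy)
  calc mvar ν = ∫ _, mvar ν ∂(μ : Measure X) := by simp
    _ ≤ ∫ x, ∫ y, dist y x ^ 2 ∂(ν : Measure X) ∂(μ : Measure X) :=
        integral_mono (integrable_const _) hint.integral_prod_left (mvar_le ν)
    _ = ∫ y, ∫ x, dist y x ^ 2 ∂(μ : Measure X) ∂(ν : Measure X) :=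
        integral_integral_swap hint
    _ = ∫ _, mvar μ ∂(ν : Measure X) := integral_congr_ae hbary
    _ = mvar μ := by simp

end Proof

theorem variance_reduction_general
    {X : Type*} [MetricSpace X] [CompactSpace X]
    [MeasurableSpace X] [BorelSpace X]
    (m : ProbabilityMeasure X)
    (B : ProbabilityMeasure X → ProbabilityMeasure X)
    (hB : ∀ ρ : ProbabilityMeasure X, mSupport (B ρ) ⊆ bary ρ ∧
      ∀ ν : ProbabilityMeasure X, mSupport ν ⊆ bary ρ → W2 (B ρ) m ≤ W2 ν m)
    (μ : ProbabilityMeasure X) :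
    mvar (B μ) ≤ mvar μ :=
  mvar_le_of_mSupport_subset_bary (hB μ).1

/-- Variance reduction: if `(X,d,m)` is regular and `B` assigns to each `ρ ∈ P(X)` the
unique minimizer of `ν ↦ W₂(ν,m)` among all `ν` with `supp ν ⊆ b(ρ)`, then
`var(B(μ)) ≤ var(μ)`. -/
theorem variance_reduction
    {X : Type*} [MetricSpace X] [CompactSpace X]
    [MeasurableSpace X] [BorelSpace X]
    (m : ProbabilityMeasure X) (hreg : Regular m)
    (B : ProbabilityMeasure X → ProbabilityMeasure X)
    (hB : ∀ ρ : ProbabilityMeasure X, mSupport (B ρ) ⊆ bary ρ ∧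
      ∀ ν : ProbabilityMeasure X, mSupport ν ⊆ bary ρ → W2 (B ρ) m ≤ W2 ν m)
    (μ : ProbabilityMeasure X) :
    mvar (B μ) ≤ mvar μ :=
  variance_reduction_general m B hB μ
end

section
/- Let K be a nonempty closed subset of Euclidean space ℝⁿ. Then for Lebesgue-almost every x ∈ ℝⁿ, the set of minimizers of y ↦ |x − y|² over y ∈ K contains exactly one point; that is, x has a unique nearest point in K. -/
/-!
The distance function `f = infDist · K` is 1-Lipschitz, hence differentiable almost everywhere by
Rademacher's theorem. If `f` is differentiable at `x`, then `Df(x) (y - x) = -f x` for every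
nearest point `y`, since `f` decreases at unit speed along the segment from `x` to `y`. For two
nearest points `y, y'` this gives `‖(y - x) + (y' - x)‖ ≥ -Df(x) ((y - x) + (y' - x)) = 2 f x`, so
the triangle inequality is an equality between vectors of equal norm, and strict convexity of the
norm forces `y = y'`.
-/

open MeasureTheory Metric AffineMap

theorem infDist_eq_dist_iff_forall_dist_le {α : Type*} [PseudoMetricSpace α] {K : Set α}
    {x y : α} (hy : y ∈ K) : infDist x K = dist x y ↔ ∀ z ∈ K, dist x y ≤ dist x z :=
  ⟨fun h _ hz => h ▸ infDist_le_dist_of_mem hz,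
    fun h => le_antisymm (infDist_le_dist_of_mem hy) ((le_infDist ⟨y, hy⟩).2 h)⟩

section NormedSpace

variable {E : Type*} [NormedAddCommGroup E] [NormedSpace ℝ E] {K : Set E} {x y : E}

/-- `infDist · K ≤ dist · y`, with equality at `x`, and `dist · y` is affine along the line
through `x` and `y` for parameters `t < 1`. -/
theorem isLocalMax_infDist_lineMap_add (hy : y ∈ K) (hxy : infDist x K = dist x y) :
    IsLocalMax (fun t : ℝ => infDist (lineMap x y t) K + t * dist x y) 0 := by
  filter_upwards [Iio_mem_nhds one_pos] with t ht
  have hdist : dist (lineMap x y t) y = (1 - t) * dist x y := by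
    rw [dist_lineMap_right, Real.norm_eq_abs, abs_of_pos (sub_pos.2 ht)]
  have := infDist_le_dist_of_mem (x := lineMap x y t) hy
  simp only [lineMap_apply_zero, zero_mul, add_zero, hxy]
  linarith

theorem fderiv_infDist_apply_sub (hx : DifferentiableAt ℝ (infDist · K) x) (hy : y ∈ K)
    (hxy : infDist x K = dist x y) : fderiv ℝ (infDist · K) x (y - x) = -infDist x K := by
  have hline : HasDerivAt (fun t : ℝ => infDist (lineMap x y t) K + t * dist x y)
      (fderiv ℝ (infDist · K) x (y - x) + dist x y) 0 := by
    refine .add (hx.hasFDerivAt.comp_hasDerivAt_of_eq 0 hasDerivAt_lineMap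
      (lineMap_apply_zero x y).symm) ?_
    simpa using (hasDerivAt_id (0 : ℝ)).mul_const (dist x y)
  rw [hxy]
  linarith [(isLocalMax_infDist_lineMap_add hy hxy).hasDerivAt_eq_zero hline]

theorem eq_of_infDist_eq_dist_of_differentiableAt [StrictConvexSpace ℝ E] {y' : E}
    (hx : DifferentiableAt ℝ (infDist · K) x) (hy : y ∈ K) (hy' : y' ∈ K)
    (hxy : infDist x K = dist x y) (hxy' : infDist x K = dist x y') : y = y' := by
  set L := fderiv ℝ (infDist · K) x
  have hL : ‖L‖ ≤ 1 := by
    simpa using norm_fderiv_le_of_lipschitz ℝ (lipschitz_infDist_pt K) (x₀ := x)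
  have hnorm : ‖y - x‖ = ‖y' - x‖ := by rw [← dist_eq_norm', ← dist_eq_norm', ← hxy, ← hxy']
  have hsum : ‖y - x + (y' - x)‖ = ‖y - x‖ + ‖y' - x‖ := by
    refine le_antisymm (norm_add_le _ _) ?_
    have hLsum : L (y - x + (y' - x)) = -(‖y - x‖ + ‖y' - x‖) := by
      rw [map_add, fderiv_infDist_apply_sub hx hy hxy, fderiv_infDist_apply_sub hx hy' hxy',
        hxy, dist_eq_norm', hnorm]
      ring
    calc ‖y - x‖ + ‖y' - x‖ = -L (y - x + (y' - x)) := by rw [hLsum, neg_neg]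
      _ ≤ ‖L (y - x + (y' - x))‖ := neg_le_abs _
      _ ≤ ‖L‖ * ‖y - x + (y' - x)‖ := L.le_opNorm _
      _ ≤ ‖y - x + (y' - x)‖ := mul_le_of_le_one_left (norm_nonneg _) hL
  simpa using eq_of_norm_eq_of_norm_add_eq hnorm hsum

end NormedSpace

/-- For a nonempty closed set `K ⊆ ℝⁿ`, Lebesgue-almost every `x ∈ ℝⁿ` has a unique
nearest point in `K`, i.e. the set of minimizers of `y ↦ ‖x - y‖²` over `K` is a
singleton. -/
theorem ae_existsUnique_nearest_point
    (n : ℕ) (K : Set (EuclideanSpace ℝ (Fin n)))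
    (hK : IsClosed K) (hKne : K.Nonempty) :
    ∀ᵐ x ∂(volume : Measure (EuclideanSpace ℝ (Fin n))),
      ∃! y : EuclideanSpace ℝ (Fin n),
        y ∈ K ∧ ∀ z ∈ K, ‖x - y‖ ^ 2 ≤ ‖x - z‖ ^ 2 := by
  have nearest_iff {x y} (hy : y ∈ K) :
      (∀ z ∈ K, ‖x - y‖ ^ 2 ≤ ‖x - z‖ ^ 2) ↔ infDist x K = dist x y := by
    rw [infDist_eq_dist_iff_forall_dist_le hy]
    simp only [dist_eq_norm, sq_le_sq₀ (norm_nonneg _) (norm_nonneg _)]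
  filter_upwards [(lipschitz_infDist_pt K).ae_differentiableAt] with x hx
  obtain ⟨y, hy, hxy⟩ := hK.exists_infDist_eq_dist hKne x
  refine ⟨y, ⟨hy, (nearest_iff hy).2 hxy⟩, fun y' ⟨hy', hy'_min⟩ => ?_⟩
  exact (eq_of_infDist_eq_dist_of_differentiableAt hx hy hy' hxy
    ((nearest_iff hy').1 hy'_min)).symm
end

section
/- Let K ⊆ ℝⁿ be a nonempty compact set and let m be a compactly supported probability measure on ℝⁿ that is absolutely continuous with respect to Lebesgue measure. Let T : ℝⁿ → K be a map sending m-almost every x to its (m-a.e. unique) nearest point in K. Then the pushforward T_# m minimizes ν ↦ W₂(m, ν) over all probability measures ν on ℝⁿ with supp ν ⊆ K: namely W₂(m, T_# m)² = ∫ |x − T(x)|² dm(x) ≤ W₂(m, ν)² for every such ν, and in particular (Id, T)_# m is an optimal coupling between m and T_# m. -/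
open MeasureTheory

/-- `γ` is a coupling of `μ` and `ν`: a measure on `E × E` with marginals `μ` and `ν`. -/
def IsCouplingE {E : Type*} [MeasurableSpace E]
    (γ : Measure (E × E)) (μ ν : Measure E) : Prop :=
  γ.map Prod.fst = μ ∧ γ.map Prod.snd = ν

/-- The squared 2-Wasserstein distance `W₂(μ,ν)²` on a normed space. -/
noncomputable def W2sqE {E : Type*} [NormedAddCommGroup E] [MeasurableSpace E]
    (μ ν : Measure E) : ℝ :=
  sInf {c : ℝ | ∃ γ : Measure (E × E), IsCouplingE γ μ ν ∧
    c = ∫ p, ‖p.1 - p.2‖ ^ 2 ∂γ}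

/-- The support of a measure: the set of points all of whose open neighbourhoods
have positive measure. -/
def mSupportE {E : Type*} [TopologicalSpace E] [MeasurableSpace E]
    (μ : Measure E) : Set E :=
  {x : E | ∀ U : Set E, IsOpen U → x ∈ U → μ U ≠ 0}

/-!
Every coupling `γ` of `m` with a measure `ν` living on `K` moves `x` to a point `y ∈ K`, and
`‖x - y‖² ≥ ‖x - T x‖²` by the nearest-point property, so its cost is at least
`∫ ‖x - T x‖² dm`. The graph coupling `(id, T)_# m` of `m` and `T_# m` attains this bound.
-/

section

variable {E : Type*} [TopologicalSpace E] [SecondCountableTopology E] [MeasurableSpace E]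

theorem ae_mem_of_mSupportE_subset {ν : Measure E} {K : Set E} (hsupp : mSupportE ν ⊆ K) :
    ∀ᵐ x ∂ν, x ∈ K := by
  refine measure_null_of_locally_null _ fun x hx => ?_
  have hx' : x ∉ mSupportE ν := fun h => hx (hsupp h)
  simp only [mSupportE, Set.mem_ofPred_eq, not_forall, not_not] at hx'
  obtain ⟨U, hU, hxU, hνU⟩ := hx'
  exact ⟨U, mem_nhdsWithin_of_mem_nhds (hU.mem_nhds hxU), hνU⟩

end

namespace IsCouplingE

variable {E : Type*} [MeasurableSpace E] {γ : Measure (E × E)} {μ ν : Measure E}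

theorem isProbabilityMeasure [IsProbabilityMeasure μ] (hγ : IsCouplingE γ μ ν) :
    IsProbabilityMeasure γ := by
  constructor
  rw [← Set.preimage_univ (f := Prod.fst), ← Measure.map_apply measurable_fst .univ, hγ.1,
    measure_univ]

theorem ae_fst (hγ : IsCouplingE γ μ ν) {P : E → Prop} (h : ∀ᵐ x ∂μ, P x) :
    ∀ᵐ p ∂γ, P p.1 :=
  ae_of_ae_map measurable_fst.aemeasurable (hγ.1 ▸ h)

theorem ae_snd (hγ : IsCouplingE γ μ ν) {P : E → Prop} (h : ∀ᵐ y ∂ν, P y) :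
    ∀ᵐ p ∂γ, P p.2 :=
  ae_of_ae_map measurable_snd.aemeasurable (hγ.2 ▸ h)

theorem integral_comp_fst (hγ : IsCouplingE γ μ ν) {f : E → ℝ}
    (hf : AEStronglyMeasurable f μ) : ∫ p, f p.1 ∂γ = ∫ x, f x ∂μ := by
  rw [← hγ.1] at hf ⊢
  exact (integral_map measurable_fst.aemeasurable hf).symm

end IsCouplingE

theorem isCouplingE_prod {E : Type*} [MeasurableSpace E] (μ ν : Measure E)
    [IsProbabilityMeasure μ] [IsProbabilityMeasure ν] : IsCouplingE (μ.prod ν) μ ν := by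
  constructor <;> simp

theorem isCouplingE_map_graph {E : Type*} [MeasurableSpace E] (μ : Measure E) {T : E → E}
    (hT : Measurable T) : IsCouplingE (μ.map fun x => (x, T x)) μ (μ.map T) := by
  have hgraph : Measurable fun x => (x, T x) := measurable_id.prodMk hT
  constructor
  · rw [Measure.map_map measurable_fst hgraph]
    exact Measure.map_id
  · rw [Measure.map_map measurable_snd hgraph]
    rfl

section Wasserstein

variable {E : Type*} [NormedAddCommGroup E] [MeasurableSpace E]

theorem W2sqE_le_of_isCouplingE {γ : Measure (E × E)} {μ ν : Measure E}
    (hγ : IsCouplingE γ μ ν) : W2sqE μ ν ≤ ∫ p, ‖p.1 - p.2‖ ^ 2 ∂γ := by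
  refine csInf_le ⟨0, ?_⟩ ⟨γ, hγ, rfl⟩
  rintro c ⟨γ', -, rfl⟩
  exact integral_nonneg fun p => by positivity

theorem le_W2sqE_of_forall_isCouplingE {μ ν : Measure E} [IsProbabilityMeasure μ]
    [IsProbabilityMeasure ν] {c : ℝ}
    (h : ∀ γ : Measure (E × E), IsCouplingE γ μ ν → c ≤ ∫ p, ‖p.1 - p.2‖ ^ 2 ∂γ) :
    c ≤ W2sqE μ ν := by
  refine le_csInf ⟨_, μ.prod ν, isCouplingE_prod μ ν, rfl⟩ ?_
  rintro c' ⟨γ, hγ, rfl⟩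
  exact h γ hγ

variable [BorelSpace E] [SecondCountableTopology E]

theorem integrable_norm_sub_sq_of_ae_mem_bounded {γ : Measure (E × E)} [IsFiniteMeasure γ]
    {s t : Set E} (hs : Bornology.IsBounded s) (ht : Bornology.IsBounded t)
    (h₁ : ∀ᵐ p ∂γ, p.1 ∈ s) (h₂ : ∀ᵐ p ∂γ, p.2 ∈ t) :
    Integrable (fun p : E × E => ‖p.1 - p.2‖ ^ 2) γ := by
  obtain ⟨R, hR⟩ := isBounded_iff_forall_norm_le.mp hs
  obtain ⟨S, hS⟩ := isBounded_iff_forall_norm_le.mp ht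
  refine .of_bound ((measurable_fst.sub measurable_snd).norm.pow_const 2).aestronglyMeasurable
    ((R + S) ^ 2) ?_
  filter_upwards [h₁, h₂] with p hp₁ hp₂
  have hdist : ‖p.1 - p.2‖ ≤ R + S := (norm_sub_le _ _).trans (add_le_add (hR _ hp₁) (hS _ hp₂))
  rw [Real.norm_of_nonneg (by positivity)]
  exact pow_le_pow_left₀ (norm_nonneg _) hdist 2

/-- Boundedness of the supports makes every transport cost integrable; without it the Bochner
integrals in `W2sqE` could take the junk value `0`. -/
theorem integral_norm_sub_nearest_le_W2sqE {μ ν : Measure E} [IsProbabilityMeasure μ]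
    [IsProbabilityMeasure ν] {s K : Set E} (hs : Bornology.IsBounded s) (hμ : ∀ᵐ x ∂μ, x ∈ s)
    (hK : Bornology.IsBounded K) (hν : ∀ᵐ y ∂ν, y ∈ K) {T : E → E} (hT_meas : Measurable T)
    (hT : ∀ᵐ x ∂μ, ∀ z ∈ K, ‖x - T x‖ ^ 2 ≤ ‖x - z‖ ^ 2) :
    ∫ x, ‖x - T x‖ ^ 2 ∂μ ≤ W2sqE μ ν := by
  refine le_W2sqE_of_forall_isCouplingE fun γ hγ => ?_
  have := hγ.isProbabilityMeasure
  have hcost := integrable_norm_sub_sq_of_ae_mem_bounded hs hK (hγ.ae_fst hμ) (hγ.ae_snd hν)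
  rw [← hγ.integral_comp_fst (f := fun x => ‖x - T x‖ ^ 2)
    ((measurable_id.sub hT_meas).norm.pow_const 2).aestronglyMeasurable]
  refine integral_mono_of_nonneg (.of_forall fun p => by positivity) hcost ?_
  filter_upwards [hγ.ae_fst hT, hγ.ae_snd hν] with p hp₁ hp₂
  exact hp₁ p.2 hp₂

end Wasserstein

theorem pushforward_nearest_point_optimal_general
    (n : ℕ) (K : Set (EuclideanSpace ℝ (Fin n)))
    (hK : IsCompact K)
    (m : Measure (EuclideanSpace ℝ (Fin n))) [IsProbabilityMeasure m]
    (hm_compact : ∃ C : Set (EuclideanSpace ℝ (Fin n)), IsCompact C ∧ m Cᶜ = 0)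
    (T : EuclideanSpace ℝ (Fin n) → EuclideanSpace ℝ (Fin n))
    (hT_meas : Measurable T) (hT_mem : ∀ x, T x ∈ K)
    (hT : ∀ᵐ x ∂m, ∀ z ∈ K, ‖x - T x‖ ^ 2 ≤ ‖x - z‖ ^ 2) :
    W2sqE m (m.map T) = ∫ x, ‖x - T x‖ ^ 2 ∂m ∧
    (∀ ν : Measure (EuclideanSpace ℝ (Fin n)), IsProbabilityMeasure ν →
      mSupportE ν ⊆ K → W2sqE m (m.map T) ≤ W2sqE m ν) ∧
    IsCouplingE (m.map (fun x => (x, T x))) m (m.map T) ∧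
    (∫ p, ‖p.1 - p.2‖ ^ 2 ∂(m.map (fun x => (x, T x)))) = W2sqE m (m.map T) := by
  obtain ⟨C, hC, hmC⟩ := hm_compact
  have hmC' : ∀ᵐ x ∂m, x ∈ C := mem_ae_iff.2 hmC
  have := Measure.isProbabilityMeasure_map (μ := m) hT_meas.aemeasurable
  have hTK : ∀ᵐ y ∂m.map T, y ∈ K :=
    (ae_map_iff hT_meas.aemeasurable hK.isClosed.measurableSet).2 (.of_forall hT_mem)
  have hgraph := isCouplingE_map_graph m hT_meas
  have hcost : ∫ p, ‖p.1 - p.2‖ ^ 2 ∂(m.map fun x => (x, T x)) = ∫ x, ‖x - T x‖ ^ 2 ∂m :=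
    integral_map (measurable_id.prodMk hT_meas).aemeasurable
      ((measurable_fst.sub measurable_snd).norm.pow_const 2).aestronglyMeasurable
  have hW2 : W2sqE m (m.map T) = ∫ x, ‖x - T x‖ ^ 2 ∂m :=
    le_antisymm (hcost ▸ W2sqE_le_of_isCouplingE hgraph)
      (integral_norm_sub_nearest_le_W2sqE hC.isBounded hmC' hK.isBounded hTK hT_meas hT)
  refine ⟨hW2, fun ν _ hν => ?_, hgraph, hcost.trans hW2.symm⟩
  exact hW2 ▸ integral_norm_sub_nearest_le_W2sqE hC.isBounded hmC' hK.isBounded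
    (ae_mem_of_mSupportE_subset hν) hT_meas hT

/-- Let `K ⊆ ℝⁿ` be nonempty and compact, `m` a compactly supported probability measure on
`ℝⁿ`, absolutely continuous with respect to Lebesgue measure, and `T` a (measurable) map
sending `m`-a.e. `x` to its nearest point in `K`.  Then `T_# m` minimizes `ν ↦ W₂(m,ν)`
over all probability measures `ν` supported in `K`:
`W₂(m, T_# m)² = ∫ ‖x − T(x)‖² dm(x) ≤ W₂(m,ν)²` for every such `ν`, and `(Id,T)_# m` is
an optimal coupling between `m` and `T_# m`. -/
theorem pushforward_nearest_point_optimal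
    (n : ℕ) (K : Set (EuclideanSpace ℝ (Fin n)))
    (hK : IsCompact K) (hKne : K.Nonempty)
    (m : Measure (EuclideanSpace ℝ (Fin n))) [IsProbabilityMeasure m]
    (hm_compact : ∃ C : Set (EuclideanSpace ℝ (Fin n)), IsCompact C ∧ m Cᶜ = 0)
    (hm_ac : m ≪ (volume : Measure (EuclideanSpace ℝ (Fin n))))
    (T : EuclideanSpace ℝ (Fin n) → EuclideanSpace ℝ (Fin n))
    (hT_meas : Measurable T) (hT_mem : ∀ x, T x ∈ K)
    (hT : ∀ᵐ x ∂m, ∀ z ∈ K, ‖x - T x‖ ^ 2 ≤ ‖x - z‖ ^ 2) :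
    W2sqE m (m.map T) = ∫ x, ‖x - T x‖ ^ 2 ∂m ∧
    (∀ ν : Measure (EuclideanSpace ℝ (Fin n)), IsProbabilityMeasure ν →
      mSupportE ν ⊆ K → W2sqE m (m.map T) ≤ W2sqE m ν) ∧
    IsCouplingE (m.map (fun x => (x, T x))) m (m.map T) ∧
    (∫ p, ‖p.1 - p.2‖ ^ 2 ∂(m.map (fun x => (x, T x)))) = W2sqE m (m.map T) :=
  pushforward_nearest_point_optimal_general n K hK m hm_compact T hT_meas hT_mem hT
end

section
/- Let X = ℝ/ℤ be the circle with the quotient metric d(x,y) = min_{k ∈ ℤ} |x̃ − ỹ + k| for lifts x̃, ỹ. Let N be an odd positive integer and let x_i = i/N (mod 1) for i = 0, 1, ..., N−1 be N evenly spaced points. Then the set of minimizers over y ∈ X of the function y ↦ Σ_{i=0}^{N−1} d(y, x_i)² is exactly {x_0, x_1, ..., x_{N−1}}. -/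
/-! Write `y = (k + x)/N` with `k ∈ ℤ` and `|x| ≤ 1/2`. Since `j ↦ j/N` is `N`-periodic on `ℤ`,
the grid may be indexed by `j = k - m + i` (`N = 2m + 1`, `i < N`), and then every grid point
has a lift within `1/2` of the lift of `y`, at offset `(x + m - i)/N`. Hence the sum equals
`(N x² + ∑ (m - i)²) / N²`, the cross term vanishing by symmetry of `m - i` about `0`; it is
minimal exactly when `x = 0`, i.e. at the grid points. -/

open Finset

theorem Function.Periodic.sum_range_comp_add {M : Type*} [AddCommMonoid M] {g : ℤ → M} {N : ℕ}
    (hg : Function.Periodic g N) (a : ℤ) : ∑ i ∈ range N, g (a + i) = ∑ i ∈ range N, g i := by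
  have step (b : ℤ) : ∑ i ∈ range N, g (b + 1 + i) = ∑ i ∈ range N, g (b + i) := by
    cases N with
    | zero => simp
    | succ n =>
      have hwrap : g (b + 1 + n) = g (b + 0) := by
        rw [add_zero, ← hg b]; push_cast; ring_nf
      rw [sum_range_succ, sum_range_succ', hwrap]
      simp only [Nat.cast_add, Nat.cast_one, Nat.cast_zero, add_assoc, add_comm (1 : ℤ)]
  induction a using Int.induction_on with
  | zero => simp
  | succ i ih => rw [step, ih]
  | pred i ih => rw [← ih, ← step, sub_add_cancel]

theorem AddCircle.dist_coe_coe_of_abs_sub_le {p x y : ℝ} (hp : p ≠ 0) (h : |x - y| ≤ |p| / 2) :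
    dist (x : AddCircle p) y = |x - y| := by
  rw [dist_eq_norm, ← AddCircle.coe_sub, AddCircle.norm_coe_eq_abs_iff p hp]
  exact h

theorem AddCircle.coe_add_intCast (x : ℝ) (n : ℤ) : ((x + n : ℝ) : AddCircle (1 : ℝ)) = x := by
  rw [AddCircle.coe_add, (AddCircle.coe_eq_zero_iff (x := (n : ℝ)) 1).2 ⟨n, by simp⟩, add_zero]

theorem sum_range_sub_mid_eq_zero (m : ℕ) : ∑ i ∈ range (2 * m + 1), ((m : ℝ) - i) = 0 := by
  have hgauss : (∑ i ∈ range (2 * m + 1), (i : ℝ)) * 2 = (2 * (m : ℝ) + 1) * (2 * m) := by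
    have := sum_range_id_mul_two (2 * m + 1)
    rw [Nat.add_sub_cancel] at this
    rw [← Nat.cast_sum]
    exact_mod_cast this
  rw [sum_sub_distrib, sum_const, card_range, nsmul_eq_mul]
  push_cast
  linarith

theorem sum_range_sq_add_sub_mid (m : ℕ) (x : ℝ) :
    ∑ i ∈ range (2 * m + 1), (x + (m - i)) ^ 2 =
      (2 * m + 1) * x ^ 2 + ∑ i ∈ range (2 * m + 1), ((m : ℝ) - i) ^ 2 := by
  have hexpand (i : ℕ) : (x + (m - i)) ^ 2 = x ^ 2 + 2 * x * (m - i) + ((m : ℝ) - i) ^ 2 := by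
    ring
  simp only [hexpand, sum_add_distrib, ← mul_sum, sum_range_sub_mid_eq_zero, sum_const, card_range,
    nsmul_eq_mul]
  push_cast
  ring

noncomputable def gridSqDistSum (N : ℕ) (y : AddCircle (1 : ℝ)) : ℝ :=
  ∑ i ∈ range N, dist y (((i : ℝ) / N : ℝ) : AddCircle (1 : ℝ)) ^ 2

theorem gridSqDistSum_coe_int_add_div (m : ℕ) (k : ℤ) {x : ℝ} (hx : |x| ≤ 1 / 2) :
    gridSqDistSum (2 * m + 1) (((k + x) / (2 * m + 1 : ℕ) : ℝ) : AddCircle (1 : ℝ)) =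
      ((2 * m + 1) * x ^ 2 + ∑ i ∈ range (2 * m + 1), ((m : ℝ) - i) ^ 2) / (2 * m + 1) ^ 2 := by
  set N := 2 * m + 1 with hN
  have hNpos : (0 : ℝ) < N := by positivity
  let g : ℤ → ℝ := fun j ↦ dist (((k + x) / N : ℝ) : AddCircle (1 : ℝ)) ((j / N : ℝ)) ^ 2
  have hg : Function.Periodic g N := fun j ↦ by
    have hshift : ((j + N : ℤ) : ℝ) / N = j / N + 1 := by
      push_cast
      field_simp
    simp only [g, hshift, AddCircle.coe_add_period]
  have hterm (i : ℕ) (hi : i ∈ range N) : g (k - m + i) = (x + (m - i)) ^ 2 / N ^ 2 := by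
    have hiN : (i : ℝ) + 1 ≤ N := by exact_mod_cast mem_range.1 hi
    have hdiff : (k + x) / N - ((k - m + i : ℤ) : ℝ) / N = (x + (m - i)) / N := by
      push_cast
      ring
    -- `N = 2m + 1` is what makes `|x + m - i| ≤ 1/2 + m` at most `N/2`
    have hbound : |(x + (m - i)) / N| ≤ |(1 : ℝ)| / 2 := by
      rw [abs_div, abs_of_pos hNpos, div_le_iff₀ hNpos, abs_le]
      obtain ⟨hx₁, hx₂⟩ := abs_le.1 hx
      constructor <;> push_cast [hN] at hiN ⊢ <;> linarith
    simp only [g]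
    rw [AddCircle.dist_coe_coe_of_abs_sub_le one_ne_zero (hdiff ▸ hbound), hdiff, sq_abs,
      div_pow]
  calc gridSqDistSum N (((k + x) / N : ℝ) : AddCircle (1 : ℝ))
      = ∑ i ∈ range N, g i := by simp only [gridSqDistSum, g, Int.cast_natCast]
    _ = ∑ i ∈ range N, g (k - m + i) := (hg.sum_range_comp_add _).symm
    _ = ∑ i ∈ range N, (x + (m - i)) ^ 2 / N ^ 2 := sum_congr rfl hterm
    _ = _ := by rw [← sum_div, sum_range_sq_add_sub_mid, hN]; push_cast; ring

theorem AddCircle.exists_eq_coe_int_add_div {N : ℕ} (hN : 0 < N) (y : AddCircle (1 : ℝ)) :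
    ∃ (k : ℤ) (x : ℝ), |x| ≤ 1 / 2 ∧ y = (((k + x) / N : ℝ) : AddCircle (1 : ℝ)) := by
  induction y using QuotientAddGroup.induction_on with
  | H t =>
    refine ⟨round (N * t), N * t - round (N * t), abs_sub_round _, ?_⟩
    have : (N : ℝ) ≠ 0 := by positivity
    congr 1
    field_simp
    ring

theorem AddCircle.exists_lt_coe_intCast_div_eq {N : ℕ} (hN : 0 < N) (k : ℤ) :
    ∃ i < N, (((k : ℝ) / N : ℝ) : AddCircle (1 : ℝ)) = (((i : ℝ) / N : ℝ)) := by
  have hN' : (N : ℤ) ≠ 0 := by exact_mod_cast hN.ne'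
  obtain ⟨i, hi⟩ := Int.eq_ofNat_of_zero_le (Int.emod_nonneg k hN')
  refine ⟨i, by have := Int.emod_lt_of_pos k (Int.natCast_pos.2 hN); omega, ?_⟩
  have hdecomp : (k : ℝ) / N = i / N + ((k / N : ℤ) : ℝ) := by
    have hk : (k : ℝ) = i + N * ((k / N : ℤ) : ℝ) := by
      have := Int.emod_add_mul_ediv k N
      rw [hi] at this
      exact_mod_cast this.symm
    have : (N : ℝ) ≠ 0 := by positivity
    rw [hk]
    field_simp
  rw [hdecomp, AddCircle.coe_add_intCast]

theorem circle_barycenters_odd_general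
    (N : ℕ) (hN : Odd N) :
    {y : AddCircle (1 : ℝ) | ∀ z : AddCircle (1 : ℝ),
        ∑ i ∈ Finset.range N, dist y (((i : ℝ) / (N : ℝ) : ℝ) : AddCircle (1 : ℝ)) ^ 2 ≤
        ∑ i ∈ Finset.range N, dist z (((i : ℝ) / (N : ℝ) : ℝ) : AddCircle (1 : ℝ)) ^ 2} =
      {y : AddCircle (1 : ℝ) | ∃ i < N,
        y = (((i : ℝ) / (N : ℝ) : ℝ) : AddCircle (1 : ℝ))} := by
  obtain ⟨m, rfl⟩ := hN
  change {y | ∀ z, gridSqDistSum _ y ≤ gridSqDistSum _ z} = _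
  set C := ∑ i ∈ range (2 * m + 1), ((m : ℝ) - i) ^ 2
  have hNpos : 0 < 2 * m + 1 := by omega
  have hgrid (k : ℤ) : gridSqDistSum (2 * m + 1) (((k : ℝ) / (2 * m + 1 : ℕ) : ℝ)) =
      C / (2 * m + 1) ^ 2 := by
    simpa using gridSqDistSum_coe_int_add_div m k (x := 0) (by norm_num)
  have hmin (z) : C / (2 * m + 1) ^ 2 ≤ gridSqDistSum (2 * m + 1) z := by
    obtain ⟨k, x, hx, rfl⟩ := AddCircle.exists_eq_coe_int_add_div hNpos z
    rw [gridSqDistSum_coe_int_add_div m k hx]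
    gcongr
    exact le_add_of_nonneg_left (by positivity)
  ext y
  constructor
  · intro hy
    obtain ⟨k, x, hx, rfl⟩ := AddCircle.exists_eq_coe_int_add_div hNpos y
    have hx0 : x = 0 := by
      have := hy (((0 : ℤ) : ℝ) / (2 * m + 1 : ℕ) : ℝ)
      rw [gridSqDistSum_coe_int_add_div m k hx, hgrid,
        div_le_div_iff_of_pos_right (by positivity)] at this
      nlinarith [sq_nonneg x]
    subst hx0
    simpa using AddCircle.exists_lt_coe_intCast_div_eq hNpos k
  · rintro ⟨i, -, rfl⟩ z
    simpa using (hgrid i).trans_le (hmin z)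

/-- On the circle `ℝ/ℤ` with the quotient metric, for an odd number `N` of evenly spaced
points `x_i = i/N`, the set of minimizers of `y ↦ Σᵢ d(y, x_i)²` is exactly
`{x_0, …, x_{N-1}}`. -/
theorem circle_barycenters_odd
    (N : ℕ) (hN : Odd N) (hNpos : 0 < N) :
    {y : AddCircle (1 : ℝ) | ∀ z : AddCircle (1 : ℝ),
        ∑ i ∈ Finset.range N, dist y (((i : ℝ) / (N : ℝ) : ℝ) : AddCircle (1 : ℝ)) ^ 2 ≤
        ∑ i ∈ Finset.range N, dist z (((i : ℝ) / (N : ℝ) : ℝ) : AddCircle (1 : ℝ)) ^ 2} =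
      {y : AddCircle (1 : ℝ) | ∃ i < N,
        y = (((i : ℝ) / (N : ℝ) : ℝ) : AddCircle (1 : ℝ))} :=
  circle_barycenters_odd_general N hN
end
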